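/- arXiv:2605.10520 — 3 statements merged into one kernel-verified Lean document; each statement's English description precedes it below -/
import Mathlib

section
/- Let H ∈ SL(3,ℝ), y ∈ S², and let v₁, v₂ ∈ ℝ³ be orthonormal vectors with ⟨v₁, y⟩ = ⟨v₂, y⟩ = 0. Set w := H⁻¹y/‖H⁻¹y‖ and define L(v) := (1/‖H⁻¹y‖) · (I₃ − w wᵀ) H⁻¹ v. Then the norm of the cross product of the images of the tangent frame satisfies ‖L(v₁) × L(v₂)‖ = 1/‖H⁻¹y‖³. (This is the Jacobian determinant of the sphere map ρ_H at y, since its differential is Dρ_H(y)v = (1/‖H⁻¹y‖) π_{ρ_H(y)} H⁻¹ v.) -/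
open Matrix MeasureTheory
open scoped RealInnerProductSpace

noncomputable section

/-- Euclidean 3-space. -/
abbrev E3 := EuclideanSpace ℝ (Fin 3)
/-- Real 3×3 matrices. -/
abbrev M3 := Matrix (Fin 3) (Fin 3) ℝ
/-- The special linear group SL(3,ℝ). -/
abbrev SL3 := Matrix.SpecialLinearGroup (Fin 3) ℝ

/-- Matrix-vector product as a map on Euclidean 3-space. -/
def mopv (A : M3) (x : E3) : E3 :=
  (WithLp.equiv 2 (Fin 3 → ℝ)).symm (A.mulVec (WithLp.equiv 2 (Fin 3 → ℝ) x))

/-- Outer product `u vᵀ` of two vectors of Euclidean 3-space, as a 3×3 matrix. -/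
def outer (u v : E3) : M3 :=
  Matrix.vecMulVec (WithLp.equiv 2 (Fin 3 → ℝ) u) (WithLp.equiv 2 (Fin 3 → ℝ) v)

/-- Cross product on Euclidean 3-space. -/
def cross3 (u v : E3) : E3 :=
  (WithLp.equiv 2 (Fin 3 → ℝ)).symm
    (crossProduct (WithLp.equiv 2 (Fin 3 → ℝ) u) (WithLp.equiv 2 (Fin 3 → ℝ) v))

/-!
With `a = H⁻¹v₁`, `b = H⁻¹v₂` and `n = ‖H⁻¹y‖`, projecting both factors orthogonally to the unit
vector `w` keeps only the `w`-component of the cross product: `π_w a × π_w b = ⟨a × b, w⟩ w`.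
As `det H⁻¹ = 1`, the triple product `⟨H⁻¹y, a × b⟩` equals `⟨y, v₁ × v₂⟩ = ±1`, the frame
`(y, v₁, v₂)` being orthonormal; hence `‖L v₁ × L v₂‖ = n⁻² · n⁻¹`. The same triple product
shows `H⁻¹y ≠ 0`, so that `w` is indeed a unit vector.
-/

lemma EuclideanSpace.real_inner_eq_dotProduct {ι : Type*} [Fintype ι] (x y : EuclideanSpace ℝ ι) :
    ⟪x, y⟫ = x.ofLp ⬝ᵥ y.ofLp :=
  dotProduct_comm _ _

open EuclideanSpace (real_inner_eq_dotProduct)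

lemma ofLp_mopv (A : M3) (x : E3) : (mopv A x).ofLp = A *ᵥ x.ofLp := rfl

lemma ofLp_cross3 (u v : E3) : (cross3 u v).ofLp = u.ofLp ⨯₃ v.ofLp := rfl

lemma mopv_one_sub_outer (w x : E3) : mopv (1 - outer w w) x = x - ⟪w, x⟫ • w := by
  ext1
  simp [ofLp_mopv, outer, sub_mulVec, vecMulVec_mulVec, real_inner_eq_dotProduct]

lemma cross3_smul_smul (a b : ℝ) (u v : E3) : cross3 (a • u) (b • v) = (a * b) • cross3 u v := by
  ext1
  simp only [ofLp_cross3, WithLp.ofLp_smul, map_smul, LinearMap.smul_apply, smul_smul, mul_comm]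

lemma cross3_sub_inner_smul (w u v : E3) (hw : ‖w‖ = 1) :
    cross3 (u - ⟪w, u⟫ • w) (v - ⟪w, v⟫ • w) = ⟪cross3 u v, w⟫ • w := by
  have hww : ⟪w, w⟫ = 1 := by rw [real_inner_self_eq_norm_sq, hw, one_pow]
  rw [real_inner_eq_dotProduct] at hww
  ext i
  simp only [ofLp_cross3, real_inner_eq_dotProduct, WithLp.ofLp_sub, WithLp.ofLp_smul, dotProduct,
    Fin.sum_univ_three, cross_apply] at hww ⊢
  fin_cases i <;>
    simp only [Fin.zero_eta, Fin.mk_one, Fin.reduceFinMk, Fin.isValue, Pi.sub_apply, Pi.smul_apply,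
      smul_eq_mul, cons_val, cons_val_zero, cons_val_one]
  · linear_combination (-(u 1 * v 2 - u 2 * v 1)) * hww
  · linear_combination (-(u 2 * v 0 - u 0 * v 2)) * hww
  · linear_combination (-(u 0 * v 1 - u 1 * v 0)) * hww

lemma inner_mopv_cross3_mopv (A : M3) (u v x : E3) :
    ⟪mopv A u, cross3 (mopv A v) (mopv A x)⟫ = A.det * ⟪u, cross3 v x⟫ := by
  simp only [real_inner_eq_dotProduct, ofLp_cross3, ofLp_mopv, triple_product_eq_det]
  have hrows : of ![A *ᵥ u.ofLp, A *ᵥ v.ofLp, A *ᵥ x.ofLp] = of ![u.ofLp, v.ofLp, x.ofLp] * Aᵀ := by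
    ext i j
    fin_cases i <;> simp [mulVec, dotProduct, mul_apply, mul_comm]
  exact (congrArg det hrows).trans (by rw [det_mul, det_transpose, mul_comm]; rfl)

lemma abs_inner_cross3_of_orthonormal {u v x : E3} (h : Orthonormal ℝ ![u, v, x]) :
    |⟪u, cross3 v x⟫| = 1 := by
  set M : M3 := of fun i ↦ (![u, v, x] i).ofLp
  have hM : M * Mᵀ = 1 := by
    ext i j
    rw [mul_apply', one_apply, ← orthonormal_iff_ite.mp h i j]
    exact (real_inner_eq_dotProduct _ _).symm
  have hdet : M.det ^ 2 = 1 := by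
    simpa [det_mul, det_transpose, sq] using congrArg det hM
  have hMdet : ⟪u, cross3 v x⟫ = M.det := by
    rw [real_inner_eq_dotProduct, ofLp_cross3, triple_product_eq_det]
    congr 1
    ext i j
    fin_cases i <;> rfl
  rw [hMdet, ← pow_eq_one_iff_of_nonneg (abs_nonneg _) two_ne_zero, sq_abs, hdet]

/-- Jacobian of the sphere map `ρ_H` at `y`: with `w = H⁻¹y/‖H⁻¹y‖` and
`L(v) = (1/‖H⁻¹y‖)(I₃ − wwᵀ)H⁻¹v`, for any orthonormal tangent frame `v₁, v₂` at `y`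
one has `‖L(v₁) × L(v₂)‖ = 1/‖H⁻¹y‖³`. -/
theorem jacobian_of_sphere_warp (H : SL3) (y : E3) (hy : ‖y‖ = 1)
    (v₁ v₂ : E3) (hv₁ : ‖v₁‖ = 1) (hv₂ : ‖v₂‖ = 1) (hv₁₂ : ⟪v₁, v₂⟫ = 0)
    (hv₁y : ⟪v₁, y⟫ = 0) (hv₂y : ⟪v₂, y⟫ = 0)
    (w : E3) (hw : w = ‖mopv ↑(H⁻¹) y‖⁻¹ • mopv ↑(H⁻¹) y)
    (L : E3 → E3)
    (hL : ∀ v : E3, L v = ‖mopv ↑(H⁻¹) y‖⁻¹ • mopv (1 - outer w w) (mopv ↑(H⁻¹) v)) :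
    ‖cross3 (L v₁) (L v₂)‖ = (‖mopv ↑(H⁻¹) y‖ ^ 3)⁻¹ := by
  set A : M3 := ↑(H⁻¹)
  set n := ‖mopv A y‖
  have hframe : Orthonormal ℝ ![y, v₁, v₂] := by
    rw [orthonormal_iff_ite]
    intro i j
    fin_cases i <;> fin_cases j <;>
      simp [real_inner_comm v₁ y, real_inner_comm v₂ y, real_inner_comm v₁ v₂, hy, hv₁, hv₂, hv₁₂,
        hv₁y, hv₂y]
  have htriple : |⟪mopv A y, cross3 (mopv A v₁) (mopv A v₂)⟫| = 1 := by
    rw [inner_mopv_cross3_mopv, (H⁻¹).2, one_mul]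
    exact abs_inner_cross3_of_orthonormal hframe
  have hn : n ≠ 0 := by
    intro h
    rw [norm_eq_zero.mp h, inner_zero_left, abs_zero] at htriple
    exact zero_ne_one htriple
  have hw1 : ‖w‖ = 1 := by
    rw [hw, norm_smul, norm_inv, norm_norm, inv_mul_cancel₀ hn]
  have hwtriple : |⟪cross3 (mopv A v₁) (mopv A v₂), w⟫| = |n|⁻¹ := by
    rw [hw, inner_smul_right, abs_mul, real_inner_comm, htriple, mul_one, abs_inv]
  rw [hL, hL, mopv_one_sub_outer, mopv_one_sub_outer, cross3_smul_smul,
    cross3_sub_inner_smul _ _ _ hw1, smul_smul, norm_smul, hw1, mul_one, Real.norm_eq_abs,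
    abs_mul, hwtriple, abs_mul, abs_inv, abs_norm]
  ring

end
end

section
/- Change of variables on the sphere under a homography warp: for every H ∈ SL(3,ℝ) and every measurable function F : S² → [0,∞] (equivalently, every σ-integrable F : S² → ℝ), one has ∫_{S²} F(H⁻¹x/‖H⁻¹x‖) dσ(x) = ∫_{S²} F(y) · ‖Hy‖⁻³ dσ(y). -/
open Matrix MeasureTheory
open scoped RealInnerProductSpace

noncomputable section

lemma mopv_mopv (A B : M3) (x : E3) : mopv A (mopv B x) = mopv (A * B) x := by
  simp [mopv, Matrix.mulVec_mulVec]

lemma mopv_one (x : E3) : mopv 1 x = x := by simp [mopv]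

lemma mopv_ne_zero (H : SL3) {x : E3} (hx : x ≠ 0) : mopv (↑H) x ≠ 0 := by
  intro h0
  apply hx
  have h1 : mopv ↑(H⁻¹) (mopv ↑H x) = x := by
    rw [mopv_mopv, ← Matrix.SpecialLinearGroup.coe_mul, inv_mul_cancel,
      Matrix.SpecialLinearGroup.coe_one, mopv_one]
  rw [h0] at h1
  simpa [mopv] using h1.symm

/-- The unit sphere S² in Euclidean 3-space. -/
abbrev S2 : Set E3 := Metric.sphere (0 : E3) 1

lemma sphere_ne_zero {x : E3} (hx : x ∈ S2) : x ≠ 0 := by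
  have h : ‖x‖ = 1 := mem_sphere_zero_iff_norm.mp hx
  intro h0; rw [h0] at h; simp at h

/-- The right action `ρ(H,x) = H⁻¹x/‖H⁻¹x‖` of SL(3,ℝ) on the unit sphere. -/
def ρS (H : SL3) (x : S2) : S2 :=
  ⟨‖mopv ↑(H⁻¹) ↑x‖⁻¹ • mopv ↑(H⁻¹) ↑x,
    mem_sphere_zero_iff_norm.mpr (norm_smul_inv_norm (mopv_ne_zero H⁻¹ (sphere_ne_zero x.2)))⟩

/-- The standard surface measure on the unit sphere S² (total mass 4π). -/
def σ : Measure S2 := (volume : Measure E3).toSphere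

open scoped ENNReal

/-!
Truncate the cone `x ↦ G (x / ‖x‖)` over a function `G` on the unit sphere to the unit ball. In
polar coordinates its Haar integral is `(1/n) ∫ G dσ`. Composing with an invertible linear map `f`
multiplies the integral by `|det f|⁻¹`, and in polar coordinates the ray through `y` is cut
off at radius `1/‖f y‖`, which gives the weight `‖f y‖⁻ⁿ / n`. For `f = H⁻¹` and
`G = F · ‖H ·‖⁻³`, the weights cancel because `‖H ρ(H,y)‖ = ‖H⁻¹y‖⁻¹`.
-/

open Set Metric Function Module

lemma inv_norm_smul_smul_of_pos {E : Type*} [NormedAddCommGroup E] [NormedSpace ℝ E] {r : ℝ}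
    (hr : 0 < r) (x : E) : ‖r • x‖⁻¹ • r • x = ‖x‖⁻¹ • x := by
  rw [norm_smul, Real.norm_of_nonneg hr.le, smul_smul, mul_inv, mul_right_comm,
    inv_mul_cancel₀ hr.ne', one_mul]

namespace MeasureTheory

variable {E : Type*} [NormedAddCommGroup E] [NormedSpace ℝ E]

def unitBallCone (G : E → ℝ≥0∞) : E → ℝ≥0∞ :=
  (ball (0 : E) 1).indicator fun x => G (‖x‖⁻¹ • x)

lemma mul_lintegral_unitBallCone_smul (G : E → ℝ≥0∞) {w : E} (hw : w ≠ 0) (k : ℕ) :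
    (k + 1) * ∫⁻ r, unitBallCone G ((r : ℝ) • w) ∂Measure.volumeIoiPow k =
      G (‖w‖⁻¹ • w) * ENNReal.ofReal (‖w‖ ^ (k + 1))⁻¹ := by
  have hw' : 0 < ‖w‖⁻¹ := inv_pos.2 (norm_pos_iff.2 hw)
  have hcone : (fun r : Ioi (0 : ℝ) => unitBallCone G ((r : ℝ) • w)) =
      (Iio ⟨‖w‖⁻¹, hw'⟩).indicator fun _ => G (‖w‖⁻¹ • w) := by
    ext ⟨r, hr⟩
    have hr : (0 : ℝ) < r := hr
    have hball : r • w ∈ ball (0 : E) 1 ↔ r < ‖w‖⁻¹ := by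
      rw [mem_ball_zero_iff, norm_smul, Real.norm_of_nonneg hr.le,
        ← lt_div_iff₀ (norm_pos_iff.2 hw), one_div]
    simp only [unitBallCone, indicator, hball, inv_norm_smul_smul_of_pos hr, mem_Iio,
      ← Subtype.coe_lt_coe]
  rw [hcone, lintegral_indicator_const measurableSet_Iio, Measure.volumeIoiPow_apply_Iio,
    ENNReal.ofReal_div_of_pos (by positivity), mul_comm, mul_assoc, ← inv_pow,
    ENNReal.ofReal_add (Nat.cast_nonneg k) zero_le_one, ENNReal.ofReal_natCast,
    ENNReal.ofReal_one, ENNReal.div_mul_cancel (by positivity) (by finiteness)]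

variable [MeasurableSpace E] [BorelSpace E]

lemma measurable_unitBallCone {G : E → ℝ≥0∞} (hG : Measurable G) :
    Measurable (unitBallCone G) :=
  (hG.comp (by fun_prop)).indicator measurableSet_ball

variable [FiniteDimensional ℝ E] (μ : Measure E) [μ.IsAddHaarMeasure]

theorem lintegral_eq_lintegral_toSphere_lintegral_volumeIoiPow [Nontrivial E] {g : E → ℝ≥0∞}
    (hg : Measurable g) :
    ∫⁻ x, g x ∂μ = ∫⁻ y, ∫⁻ r, g ((r : ℝ) • (y : E))
      ∂Measure.volumeIoiPow (finrank ℝ E - 1) ∂μ.toSphere := calc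
  ∫⁻ x, g x ∂μ = ∫⁻ x : ({0}ᶜ : Set E), g x ∂μ.comap Subtype.val := by
    rw [lintegral_subtype_comap (measurableSet_singleton 0).compl, restrict_compl_singleton]
  _ = ∫⁻ p : sphere (0 : E) 1 × Ioi (0 : ℝ), g ((p.2 : ℝ) • (p.1 : E))
        ∂μ.toSphere.prod (Measure.volumeIoiPow (finrank ℝ E - 1)) := by
    rw [← μ.measurePreserving_homeomorphUnitSphereProd.lintegral_comp_emb
      (Homeomorph.measurableEmbedding _)]
    refine lintegral_congr fun x => ?_
    simp [smul_inv_smul₀ (norm_ne_zero_iff.2 x.2)]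
  _ = _ := lintegral_prod _ (by fun_prop)

theorem lintegral_eq_ofReal_abs_det_mul_lintegral_comp {f : E →ₗ[ℝ] E}
    (hf : LinearMap.det f ≠ 0) {g : E → ℝ≥0∞} (hg : Measurable g) :
    ∫⁻ x, g x ∂μ = ENNReal.ofReal |LinearMap.det f| * ∫⁻ x, g (f x) ∂μ := by
  rw [← lintegral_map hg f.continuous_of_finiteDimensional.measurable,
    Measure.map_linearMap_addHaar_eq_smul_addHaar μ hf, lintegral_smul_measure, smul_eq_mul,
    ← mul_assoc, ← ENNReal.ofReal_mul (abs_nonneg _), abs_inv,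
    mul_inv_cancel₀ (abs_ne_zero.2 hf), ENNReal.ofReal_one, one_mul]

lemma finrank_mul_lintegral_unitBallCone_comp [Nontrivial E] {f : E →ₗ[ℝ] E}
    (hf : Injective f) {G : E → ℝ≥0∞} (hG : Measurable G) :
    finrank ℝ E * ∫⁻ x, unitBallCone G (f x) ∂μ =
      ∫⁻ y, G (‖f y‖⁻¹ • f y) * ENNReal.ofReal (‖f y‖ ^ finrank ℝ E)⁻¹ ∂μ.toSphere := by
  obtain ⟨k, hk⟩ : ∃ k, finrank ℝ E = k + 1 :=
    Nat.exists_eq_succ_of_ne_zero finrank_pos.ne'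
  have hfy (y : sphere (0 : E) 1) : f y ≠ 0 :=
    (map_ne_zero_iff f hf).2 (ne_zero_of_mem_unit_sphere y)
  rw [lintegral_eq_lintegral_toSphere_lintegral_volumeIoiPow μ
      (g := fun x => unitBallCone G (f x))
      ((measurable_unitBallCone hG).comp f.continuous_of_finiteDimensional.measurable),
    ← lintegral_const_mul' _ _ (by finiteness)]
  refine lintegral_congr fun y => ?_
  simp only [map_smul, hk, Nat.add_sub_cancel, Nat.cast_add, Nat.cast_one]
  exact mul_lintegral_unitBallCone_smul G (hfy y) k

theorem lintegral_toSphere_eq_ofReal_abs_det_mul [Nontrivial E] {f : E →ₗ[ℝ] E}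
    (hf : LinearMap.det f ≠ 0) {G : E → ℝ≥0∞} (hG : Measurable G) :
    ∫⁻ y, G y ∂μ.toSphere = ENNReal.ofReal |LinearMap.det f| *
      ∫⁻ y, G (‖f y‖⁻¹ • f y) * ENNReal.ofReal (‖f y‖ ^ finrank ℝ E)⁻¹ ∂μ.toSphere := by
  have hinj : Injective f :=
    ((Module.End.isUnit_iff f).1 ((LinearMap.isUnit_iff_isUnit_det f).2 hf.isUnit)).1
  calc ∫⁻ y, G y ∂μ.toSphere = finrank ℝ E * ∫⁻ x, unitBallCone G x ∂μ := by
        simpa using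
          (finrank_mul_lintegral_unitBallCone_comp μ (f := LinearMap.id) injective_id hG).symm
    _ = finrank ℝ E * (ENNReal.ofReal |LinearMap.det f| * ∫⁻ x, unitBallCone G (f x) ∂μ) := by
        rw [lintegral_eq_ofReal_abs_det_mul_lintegral_comp μ hf (measurable_unitBallCone hG)]
    _ = _ := by
        rw [mul_left_comm, finrank_mul_lintegral_unitBallCone_comp μ hinj hG]

end MeasureTheory

lemma mopv_eq_toEuclideanLin (A : M3) (x : E3) : mopv A x = Matrix.toEuclideanLin A x := rfl

lemma det_toEuclideanLin (A : M3) : LinearMap.det (Matrix.toEuclideanLin A) = A.det :=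
  LinearMap.det_toLin (PiLp.basisFun 2 ℝ (Fin 3)) A

@[fun_prop]
lemma continuous_mopv (A : M3) : Continuous (mopv A) :=
  (Matrix.toEuclideanLin A).continuous_of_finiteDimensional

lemma norm_mopv_ρS (H : SL3) (y : S2) : ‖mopv ↑H ↑(ρS H y)‖ = ‖mopv ↑H⁻¹ ↑y‖⁻¹ := by
  have hy : mopv ↑H (mopv ↑H⁻¹ ↑y) = y := by
    rw [mopv_mopv, ← Matrix.SpecialLinearGroup.coe_mul, mul_inv_cancel,
      Matrix.SpecialLinearGroup.coe_one, mopv_one]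
  rw [ρS, mopv_eq_toEuclideanLin, map_smul, ← mopv_eq_toEuclideanLin, hy, norm_smul, norm_inv,
    norm_norm, norm_eq_of_mem_sphere, mul_one]

/-- change of variables on the sphere under a homography warp:
`∫_{S²} F(H⁻¹x/‖H⁻¹x‖) dσ(x) = ∫_{S²} F(y)‖Hy‖⁻³ dσ(y)`. -/
theorem sphere_change_of_variables (H : SL3) (F : S2 → ℝ≥0∞) (hF : Measurable F) :
    ∫⁻ x : S2, F (ρS H x) ∂σ =
      ∫⁻ y : S2, F y * ENNReal.ofReal ((‖mopv ↑H ↑y‖ ^ 3)⁻¹) ∂σ := by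
  set w : S2 → ℝ≥0∞ := fun y => F y * ENNReal.ofReal ((‖mopv ↑H ↑y‖ ^ 3)⁻¹)
  have hval : MeasurableEmbedding (Subtype.val : S2 → E3) :=
    .subtype_coe isClosed_sphere.measurableSet
  have hw : Measurable (extend Subtype.val w 0) :=
    hval.measurable_extend (hF.mul (by fun_prop)) measurable_const
  have hdet : LinearMap.det (Matrix.toEuclideanLin (↑H⁻¹ : M3)) = 1 := by
    rw [det_toEuclideanLin, H⁻¹.2]
  have hcov := lintegral_toSphere_eq_ofReal_abs_det_mul volume (hdet ▸ one_ne_zero) hw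
  simp only [hdet, abs_one, ENNReal.ofReal_one, one_mul, finrank_euclideanSpace_fin,
    ← mopv_eq_toEuclideanLin] at hcov
  calc ∫⁻ x : S2, F (ρS H x) ∂σ
      = ∫⁻ x : S2, extend Subtype.val w 0 (ρS H x) * ENNReal.ofReal (‖mopv ↑H⁻¹ ↑x‖ ^ 3)⁻¹ ∂σ := by
        refine lintegral_congr fun x => ?_
        have hx : ‖mopv ↑H⁻¹ ↑x‖ ^ 3 ≠ 0 :=
          pow_ne_zero 3 (norm_ne_zero_iff.2 (mopv_ne_zero H⁻¹ (sphere_ne_zero x.2)))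
        rw [hval.injective.extend_apply]
        dsimp only [w]
        rw [norm_mopv_ρS, inv_pow, inv_inv, mul_assoc, ← ENNReal.ofReal_mul (by positivity),
          mul_inv_cancel₀ hx, ENNReal.ofReal_one, mul_one]
    _ = ∫⁻ y : S2, extend Subtype.val w 0 y ∂σ := hcov.symm
    _ = _ := lintegral_congr fun y => hval.injective.extend_apply w 0 y
end
end

section
/- First variation of the photometric cost: let h : ℝ³∖{0} → ℝ be continuously differentiable and 0-homogeneous, let f̊ : S² → ℝ be continuous, and let Δ be any real 3×3 matrix. Then the function φ(t) := ½ ∫_{S²} ( h(exp(−tΔ)x) − f̊(x) )² dσ(x) is differentiable at t = 0 with φ′(0) = − ∫_{S²} ( h(x) − f̊(x) ) · ⟨∇h(x), Δx⟩ dσ(x), where ∇h denotes the Euclidean gradient of h. -/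
open Matrix MeasureTheory
open scoped RealInnerProductSpace

noncomputable section

/-!
Writing `γ_t(x) = exp(-tΔ)x`, the integrand `(h(γ_t x) - f̊(x))²` is differentiable in `t` with
derivative `2 (h(γ_t x) - f̊(x)) Dh(γ_t x)(-Δ γ_t x)`, by the chain rule: `exp(-tΔ)` is invertible,
so `γ_t x` stays in `ℝ³ ∖ {0}`, where `h` is C¹. This derivative is jointly continuous in `(t, x)`,
hence bounded on `[-1, 1] × S²` by compactness, and dominated convergence allows differentiating
under the integral sign. At `t = 0` it equals `-2 (h(x) - f̊(x)) ⟨∇h(x), Δx⟩`.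
-/

section DifferentiationUnderIntegral

variable {X E : Type*} [TopologicalSpace X] [CompactSpace X] [MeasurableSpace X]
  [OpensMeasurableSpace X] [NormedAddCommGroup E] [NormedSpace ℝ E]
  [SecondCountableTopologyEither X E] {μ : Measure X} [IsFiniteMeasure μ]

theorem hasDerivAt_integral_of_continuous_deriv {F F' : ℝ → X → E}
    (hF : ∀ t, Continuous (F t)) (hF' : Continuous (Function.uncurry F'))
    (hderiv : ∀ t x, HasDerivAt (F · x) (F' t x) t) (t₀ : ℝ) :
    HasDerivAt (fun t ↦ ∫ x, F t x ∂μ) (∫ x, F' t₀ x ∂μ) t₀ := by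
  obtain ⟨C, hC⟩ := ((isCompact_closedBall t₀ 1).prod isCompact_univ).exists_bound_of_continuousOn
    hF'.continuousOn
  exact (hasDerivAt_integral_of_dominated_loc_of_deriv_le (bound := fun _ ↦ C)
    (Metric.closedBall_mem_nhds t₀ one_pos) (.of_forall fun t ↦ (hF t).aestronglyMeasurable)
    ((hF t₀).integrable_of_hasCompactSupport (.of_compactSpace _))
    (hF'.comp (.prodMk_right t₀)).aestronglyMeasurable
    (.of_forall fun x t ht ↦ hC (t, x) ⟨ht, trivial⟩) (integrable_const C)
    (.of_forall fun x t _ ↦ hderiv t x)).2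

theorem hasDerivAt_integral_sq_sub_comp {V : Type*} [NormedAddCommGroup V] [NormedSpace ℝ V]
    {h : V → ℝ} {U : Set V} (hreg : ContDiffOn ℝ 1 h U) (hU : IsOpen U) {γ γ' : ℝ → X → V}
    (hγ : Continuous (Function.uncurry γ)) (hγ' : Continuous (Function.uncurry γ'))
    (hγU : ∀ p : ℝ × X, γ p.1 p.2 ∈ U) (hderiv : ∀ t x, HasDerivAt (γ · x) (γ' t x) t)
    {f : X → ℝ} (hf : Continuous f) (t₀ : ℝ) :
    HasDerivAt (fun t ↦ ∫ x, (h (γ t x) - f x) ^ 2 ∂μ)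
      (∫ x, 2 * (h (γ t₀ x) - f x) * fderiv ℝ h (γ t₀ x) (γ' t₀ x) ∂μ) t₀ := by
  have hh : ∀ p ∈ U, HasFDerivAt h (fderiv ℝ h p) p := fun p hp ↦
    ((hreg.differentiableOn one_ne_zero).differentiableAt (hU.mem_nhds hp)).hasFDerivAt
  have hhγ : Continuous fun p : ℝ × X ↦ h (γ p.1 p.2) := hreg.continuousOn.comp_continuous hγ hγU
  refine hasDerivAt_integral_of_continuous_deriv
    (F' := fun t x ↦ 2 * (h (γ t x) - f x) * fderiv ℝ h (γ t x) (γ' t x))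
    (fun t ↦ ?_) ?_ (fun t x ↦ ?_) t₀
  · exact ((hhγ.comp (.prodMk_right t)).sub hf).pow 2
  · exact (continuous_const.mul (hhγ.sub (hf.comp continuous_snd))).mul
      (((hreg.continuousOn_fderiv_of_isOpen hU le_rfl).comp_continuous hγ hγU).clm_apply hγ')
  · simpa using (((hh _ (hγU (t, x))).comp_hasDerivAt t (hderiv t x)).sub_const (f x)).fun_pow 2

end DifferentiationUnderIntegral

section MatrixAction

def mopvCLM (x : E3) : M3 →L[ℝ] E3 :=
  LinearMap.toContinuousLinearMap
    { toFun := fun A ↦ mopv A x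
      map_add' := fun A B ↦ by simp [mopv, Matrix.add_mulVec]
      map_smul' := fun c A ↦ by simp [mopv, Matrix.smul_mulVec] }

lemma continuous_mopv_s7 : Continuous fun p : M3 × E3 ↦ mopv p.1 p.2 :=
  (PiLp.continuous_toLp 2 _).comp
    (continuous_fst.matrix_mulVec ((PiLp.continuous_ofLp 2 _).comp continuous_snd))

lemma mopv_zero_right (A : M3) : mopv A 0 = 0 := by simp [mopv]

lemma mopv_neg_left (A : M3) (x : E3) : mopv (-A) x = -mopv A x := by
  simp [mopv, Matrix.neg_mulVec]

lemma mopv_ne_zero_of_isUnit {A : M3} (hA : IsUnit A) {x : E3} (hx : x ≠ 0) : mopv A x ≠ 0 := by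
  obtain ⟨B, hBA⟩ : ∃ B, B * A = 1 := ⟨↑hA.unit⁻¹, hA.val_inv_mul⟩
  intro h0
  apply hx
  rw [← mopv_one x, ← hBA, ← mopv_mopv, h0, mopv_zero_right]

/- The calculus of `NormedSpace.exp` needs a normed algebra structure on matrices; the `ℓ∞`
operator norm induces the product topology, so the results hold for the plain topology. -/
attribute [local instance] Matrix.linftyOpNormedRing Matrix.linftyOpNormedAlgebra in
lemma continuous_exp_neg_smul (Δ : M3) : Continuous fun t : ℝ ↦ NormedSpace.exp (-(t • Δ)) :=
  NormedSpace.exp_continuous.comp (continuous_id.smul continuous_const).neg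

attribute [local instance] Matrix.linftyOpNormedRing Matrix.linftyOpNormedAlgebra in
lemma hasDerivAt_mopv_exp_neg_smul (Δ : M3) (x : E3) (t : ℝ) :
    HasDerivAt (fun s : ℝ ↦ mopv (NormedSpace.exp (-(s • Δ))) x)
      (-mopv Δ (mopv (NormedSpace.exp (-(t • Δ))) x)) t := by
  have hexp := hasDerivAt_exp_smul_const' (𝕂 := ℝ) (-Δ) t
  simp only [smul_neg] at hexp
  rw [← mopv_neg_left, mopv_mopv]
  exact (mopvCLM x).hasFDerivAt.comp_hasDerivAt t hexp

end MatrixAction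

instance : IsFiniteMeasure σ := by
  unfold σ
  infer_instance

theorem photometric_cost_first_variation_general (h : E3 → ℝ)
    (hreg : ContDiffOn ℝ 1 h {(0 : E3)}ᶜ)
    (f0 : S2 → ℝ) (hf0 : Continuous f0) (Δ : M3) (φ : ℝ → ℝ)
    (hφ : ∀ t : ℝ, φ t = (1 / 2) *
      ∫ x : S2, (h (mopv (NormedSpace.exp (-(t • Δ))) ↑x) - f0 x) ^ 2 ∂σ) :
    HasDerivAt φ (-∫ x : S2, (h ↑x - f0 x) * ⟪gradient h ↑x, mopv Δ ↑x⟫ ∂σ) 0 := by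
  set γ : ℝ → S2 → E3 := fun t x ↦ mopv (NormedSpace.exp (-(t • Δ))) x with hγ
  have hγ_ne : ∀ p : ℝ × S2, γ p.1 p.2 ∈ ({0}ᶜ : Set E3) := fun p ↦
    mopv_ne_zero_of_isUnit (Matrix.isUnit_exp _) (sphere_ne_zero p.2.2)
  have hγ_cont : Continuous (Function.uncurry γ) :=
    continuous_mopv_s7.comp ((continuous_exp_neg_smul Δ).prodMap continuous_subtype_val)
  have key := hasDerivAt_integral_sq_sub_comp (μ := σ) (γ' := fun t x ↦ -mopv Δ (γ t x))
    hreg isOpen_compl_singleton hγ_cont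
    (continuous_mopv_s7.comp (continuous_const.prodMk hγ_cont)).neg hγ_ne
    (fun t x ↦ hasDerivAt_mopv_exp_neg_smul Δ x t) hf0 0
  rw [show φ = _ from funext hφ]
  refine (key.const_mul (1 / 2 : ℝ)).congr_deriv ?_
  have hγ₀ : ∀ x, γ 0 x = x := fun x ↦ by simp [hγ, mopv_one]
  simp only [hγ₀, map_neg, inner_gradient_left]
  rw [← integral_const_mul, ← integral_neg]
  congr 1 with x
  ring

/-- first variation of the photometric cost. If `h` is C¹ and
0-homogeneous on ℝ³∖{0}, `f̊` is continuous on S², then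
`φ(t) = ½∫(h(exp(−tΔ)x) − f̊(x))² dσ` is differentiable at `t = 0` with
`φ′(0) = −∫(h(x) − f̊(x))⟨∇h(x), Δx⟩ dσ`. -/
theorem photometric_cost_first_variation (h : E3 → ℝ)
    (hreg : ContDiffOn ℝ 1 h {(0 : E3)}ᶜ)
    (hhom : ∀ c : ℝ, 0 < c → ∀ x : E3, x ≠ 0 → h (c • x) = h x)
    (f0 : S2 → ℝ) (hf0 : Continuous f0) (Δ : M3) (φ : ℝ → ℝ)
    (hφ : ∀ t : ℝ, φ t = (1 / 2) *
      ∫ x : S2, (h (mopv (NormedSpace.exp (-(t • Δ))) ↑x) - f0 x) ^ 2 ∂σ) :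
    HasDerivAt φ (-∫ x : S2, (h ↑x - f0 x) * ⟪gradient h ↑x, mopv Δ ↑x⟫ ∂σ) 0 :=
  photometric_cost_first_variation_general h hreg f0 hf0 Δ φ hφ
end
end
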